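/- arXiv:2307.03540 — 2 statements merged into one kernel-verified Lean document; each statement's English description precedes it below -/
import Mathlib

section
/- In a dual weak brace S, the annihilator Ann(S) equals {a ∈ S : a · b = b · a = [a,b]₊ = a⁰ + b⁰ for all b ∈ S}, where a · b = -a + a ∘ b - b, [a,b]₊ = -a - b + a + b, and a⁰ = a - a. -/
/-- A weak brace: `(S,+)` and `(S,∘)` are inverse semigroups satisfying
`a ∘ (b + c) = a ∘ b - a + a ∘ c` and `a ∘ a⁻ = -a + a`. -/
class WeakBrace (S : Type*) where
  add : S → S → S
  mul : S → S → S
  neg : S → S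
  inv : S → S
  add_assoc : ∀ a b c : S, add (add a b) c = add a (add b c)
  mul_assoc : ∀ a b c : S, mul (mul a b) c = mul a (mul b c)
  add_reg : ∀ a : S, add (add a (neg a)) a = a
  neg_reg : ∀ a : S, add (add (neg a) a) (neg a) = neg a
  neg_unique : ∀ a x : S, add (add a x) a = a → add (add x a) x = x → x = neg a
  mul_reg : ∀ a : S, mul (mul a (inv a)) a = a
  inv_reg : ∀ a : S, mul (mul (inv a) a) (inv a) = inv a
  inv_unique : ∀ a x : S, mul (mul a x) a = a → mul (mul x a) x = x → x = inv a
  distrib : ∀ a b c : S, mul a (add b c) = add (add (mul a b) (neg a)) (mul a c)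
  link : ∀ a : S, mul a (inv a) = add (neg a) a

/-- A dual weak brace: a weak brace whose multiplicative semigroup is Clifford. -/
class DualWeakBrace (S : Type*) extends WeakBrace S where
  clifford : ∀ a : S, WeakBrace.mul a (WeakBrace.inv a) = WeakBrace.mul (WeakBrace.inv a) a

namespace WeakBrace

variable {S : Type*} [WeakBrace S]

/-- `λ_a(b) = -a + a ∘ b`. -/
def lam (a b : S) : S := add (neg a) (mul a b)

/-- `ρ_b(a) = (-a + a ∘ b)⁻ ∘ a ∘ b`. -/
def rho (b a : S) : S := mul (mul (inv (lam a b)) a) b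

/-- `a · b = -a + a ∘ b - b`. -/
def cdot (a b : S) : S := add (add (neg a) (mul a b)) (neg b)

/-- `a⁰ = a - a`. -/
def sq (a : S) : S := add a (neg a)

/-- Additive idempotent (the sets of idempotents of `+` and `∘` coincide). -/
def IsIdem (e : S) : Prop := add e e = e

/-- `[a,b]₊ = -a - b + a + b`. -/
def brkt (a b : S) : S := add (add (add (neg a) (neg b)) a) b

/-- `I` is a full inverse subsemigroup of `(S,+)`. -/
def IsFullAddSub (I : Set S) : Prop :=
  (∀ e : S, IsIdem e → e ∈ I) ∧ (∀ x ∈ I, ∀ y ∈ I, add x y ∈ I) ∧ (∀ x ∈ I, neg x ∈ I)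

/-- `I` is a normal subsemigroup of `(S,+)`. -/
def IsNormalAdd (I : Set S) : Prop :=
  IsFullAddSub I ∧ ∀ a : S, ∀ x ∈ I, add (add (neg a) x) a ∈ I

/-- `I` is a normal subsemigroup of `(S,∘)`. -/
def IsNormalMul (I : Set S) : Prop :=
  (∀ e : S, IsIdem e → e ∈ I) ∧ (∀ x ∈ I, ∀ y ∈ I, mul x y ∈ I) ∧ (∀ x ∈ I, inv x ∈ I) ∧
    ∀ a : S, ∀ x ∈ I, mul (mul (inv a) x) a ∈ I

/-- `I` is a left ideal of the weak brace `S`. -/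
def IsLeftIdeal (I : Set S) : Prop :=
  IsFullAddSub I ∧ ∀ a : S, ∀ x ∈ I, lam a x ∈ I

/-- `I` is an ideal of the weak brace `S`. -/
def IsIdeal (I : Set S) : Prop :=
  IsNormalAdd I ∧ (∀ a : S, ∀ x ∈ I, lam a x ∈ I) ∧ IsNormalMul I

/-- The socle `Soc(S)`. -/
def Soc (S : Type*) [WeakBrace S] : Set S :=
  {a | ∀ b : S, add a b = mul a b ∧ add a b = add b a}

/-- The annihilator `Ann(S)`. -/
def Ann (S : Type*) [WeakBrace S] : Set S :=
  {a | ∀ b : S, add a b = add b a ∧ add a b = mul a b ∧ mul a b = mul b a}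

/-- The congruence `a ∼_I b ⟺ a⁰ = b⁰ and -a + b ∈ I` associated to an ideal `I`. -/
def simI (I : Set S) (a b : S) : Prop := sq a = sq b ∧ add (neg a) b ∈ I

/-- Membership in the inverse subsemigroup of `(S,+)` generated by a set `X`. -/
inductive genAdd (X : Set S) : S → Prop
  | base : ∀ x ∈ X, genAdd X x
  | add : ∀ a b : S, genAdd X a → genAdd X b → genAdd X (add a b)
  | neg : ∀ a : S, genAdd X a → genAdd X (neg a)

/-- `X · Y`: the additive inverse subsemigroup generated by the elements `x · y`. -/
def cdotSet (X Y : Set S) : Set S :=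
  {s | genAdd {z | ∃ x ∈ X, ∃ y ∈ Y, z = cdot x y} s}

/-- `S^(n)` for `n ≥ 1`: `S^(1) = S`, `S^(n+1) = S^(n) · S`. -/
def Spow (S : Type*) [WeakBrace S] : ℕ → Set S
  | 0 => Set.univ
  | 1 => Set.univ
  | (n+2) => cdotSet (Spow S (n+1)) Set.univ

end WeakBrace

/-!
Both semigroups of a dual weak brace are Clifford. For `(S,∘)` this is assumed; for `(S,+)`,
applying `λ_{a⁻}` to the idempotent `-a + a = a ∘ a⁻` and using additivity of `λ_{a⁻}` gives
`(-a + a) + (a⁻ - a⁻) = -a + a`. Since `-a⁻ + a⁻ = a⁻ ∘ a = a ∘ a⁻ = -a + a`, replacing `a` by `a⁻`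
and then by `-a` yields `(-a + a) + a⁰ = -a + a` and `a⁰ + (-a + a) = a⁰`, so `a⁰ = -a + a` because
idempotents commute. Hence every `a⁰` is additively central, and since `(a ∘ b)⁰ = a⁰ ∘ b⁰` and
`e + e ∘ f = e ∘ f` for idempotents, `a⁰ + a ∘ b = a ∘ b = a ∘ b + b⁰`.
Adding `a` on the left and `b` on the right then turns `a · b = a⁰ + b⁰` into `a ∘ b = a + b`, and
adding `b + a` on the left turns `[a,b]₊ = a⁰ + b⁰` into `a + b = b + a`. Together these are the
defining conditions of `Ann(S)`.
-/

structure IsInverseSemigroup {S : Type*} (op : S → S → S) (iv : S → S) : Prop where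
  assoc : ∀ a b c : S, op (op a b) c = op a (op b c)
  mul_inv_mul : ∀ a : S, op (op a (iv a)) a = a
  inv_mul_inv : ∀ a : S, op (op (iv a) a) (iv a) = iv a
  eq_inv_of : ∀ a x : S, op (op a x) a = a → op (op x a) x = x → x = iv a

namespace IsInverseSemigroup

variable {S : Type*} {op : S → S → S} {iv : S → S}

theorem inv_inv (h : IsInverseSemigroup op iv) (a : S) : iv (iv a) = a :=
  (h.eq_inv_of (iv a) a (h.inv_mul_inv a) (h.mul_inv_mul a)).symm

theorem mul_inv_idem (h : IsInverseSemigroup op iv) (a : S) :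
    op (op a (iv a)) (op a (iv a)) = op a (iv a) := by
  rw [← h.assoc, h.mul_inv_mul]

theorem inv_mul_idem (h : IsInverseSemigroup op iv) (a : S) :
    op (op (iv a) a) (op (iv a) a) = op (iv a) a := by
  rw [← h.assoc, h.inv_mul_inv]

theorem inv_eq_self_of_idem (h : IsInverseSemigroup op iv) {e : S} (he : op e e = e) :
    iv e = e :=
  (h.eq_inv_of e e (by rw [he, he]) (by rw [he, he])).symm

theorem mul_idem_of_idem (h : IsInverseSemigroup op iv) {e f : S} (he : op e e = e)
    (hf : op f f = f) : op (op e f) (op e f) = op e f := by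
  have hee : ∀ z, op e (op e z) = op e z := fun z => by rw [← h.assoc, he]
  have hff : ∀ z, op f (op f z) = op f z := fun z => by rw [← h.assoc, hf]
  have hr := h.mul_inv_mul (op e f)
  have hl := h.inv_mul_inv (op e f)
  have hinv := h.inv_inv (op e f)
  set x := iv (op e f)
  have hfxe : op f (op x (op e (op f (op x e)))) = op f (op x e) := by
    simpa only [h.assoc] using congrArg (fun w => op f (op w e)) hl
  -- `f x e` is another inverse of `e f`, hence equal to `x`
  have hx : op (op f x) e = x :=
    h.eq_inv_of (op e f) _ (by simpa only [h.assoc, hee, hff] using hr)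
      (by simpa only [h.assoc, hee, hff] using hfxe)
  have hxx : op x x = x := by
    calc op x x = op (op (op f x) e) (op (op f x) e) := by rw [hx]
      _ = op (op f x) e := by simpa only [h.assoc, hee] using hfxe
      _ = x := hx
  rw [← hinv, h.inv_eq_self_of_idem hxx, hxx]

theorem idem_comm (h : IsInverseSemigroup op iv) {e f : S} (he : op e e = e)
    (hf : op f f = f) : op e f = op f e := by
  have hee : ∀ z, op e (op e z) = op e z := fun z => by rw [← h.assoc, he]
  have hff : ∀ z, op f (op f z) = op f z := fun z => by rw [← h.assoc, hf]
  have hef := h.mul_idem_of_idem he hf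
  have hfe := h.mul_idem_of_idem hf he
  have hinv := h.eq_inv_of (op e f) (op f e)
    (by simpa only [h.assoc, hee, hff] using hef) (by simpa only [h.assoc, hee, hff] using hfe)
  rw [hinv, h.inv_eq_self_of_idem hef]

theorem mul_eq_of_mul_mul_eq (h : IsInverseSemigroup op iv) {e f : S} (he : op e e = e)
    (hf : op f f = f) (hefe : op (op e f) e = e) : op e f = e :=
  calc op e f = op e (op e f) := by rw [← h.assoc, he]
    _ = op (op e f) e := by conv_lhs => rw [h.idem_comm he hf, ← h.assoc]
    _ = e := hefe

theorem inv_mul (h : IsInverseSemigroup op iv) (a b : S) :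
    iv (op a b) = op (iv b) (iv a) := by
  have hc := h.idem_comm (h.mul_inv_idem b) (h.inv_mul_idem a)
  have hc' : ∀ z, op b (op (iv b) (op (iv a) (op a z))) = op (iv a) (op a (op b (op (iv b) z))) :=
    fun z => by simpa only [h.assoc] using congrArg (fun w => op w z) hc
  refine (h.eq_inv_of (op a b) _ ?_ ?_).symm
  · have hr := h.mul_inv_mul b
    simp only [h.assoc] at hr ⊢
    rw [hc', hr, ← h.assoc a, ← h.assoc (op a (iv a)), h.mul_inv_mul]
  · have hl := h.inv_mul_inv a
    simp only [h.assoc] at hl ⊢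
    rw [← hc', hl, ← h.assoc (iv b), ← h.assoc (op (iv b) b), h.inv_mul_inv]

theorem idem_comm_of_clifford (h : IsInverseSemigroup op iv)
    (hcl : ∀ a, op a (iv a) = op (iv a) a) {e : S} (he : op e e = e) (a : S) :
    op e a = op a e := by
  have hie : iv e = e := h.inv_eq_self_of_idem he
  -- in a Clifford semigroup `x = x (x x⁻)`, and `(e a)⁻ = a⁻ e` ends with `e`
  have hright : op (op e a) e = op e a := by
    have hx : op (op e a) (op (op e a) (iv (op e a))) = op e a := by
      rw [hcl, ← h.assoc, h.mul_inv_mul]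
    rw [h.inv_mul, hie] at hx
    calc op (op e a) e = op (op (op e a) (op (op e a) (op (iv a) e))) e := by rw [hx]
      _ = op (op e a) (op (op e a) (op (iv a) e)) := by simp only [h.assoc, he]
      _ = op e a := hx
  have hleft : op e (op a e) = op a e := by
    have hx : op (op (iv (op a e)) (op a e)) (op a e) = op a e := by
      rw [← hcl, h.mul_inv_mul]
    rw [h.inv_mul, hie] at hx
    calc op e (op a e) = op e (op (op (op e (iv a)) (op a e)) (op a e)) := by rw [hx]
      _ = op (op (op e (iv a)) (op a e)) (op a e) := by simp only [h.assoc, ← h.assoc e e, he]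
      _ = op a e := hx
  rw [← hright, h.assoc, hleft]

end IsInverseSemigroup

namespace WeakBrace

section WeakBrace

variable {S : Type*} [WeakBrace S]

theorem add_isInverseSemigroup : IsInverseSemigroup (add (S := S)) neg :=
  ⟨add_assoc, add_reg, neg_reg, neg_unique⟩

theorem mul_isInverseSemigroup : IsInverseSemigroup (mul (S := S)) inv :=
  ⟨mul_assoc, mul_reg, inv_reg, inv_unique⟩

theorem lam_add (c u v : S) : lam c (add u v) = add (lam c u) (lam c v) := by
  simp only [lam, distrib, add_assoc]

theorem neg_lam (a b : S) : neg (lam a b) = lam a (neg b) :=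
  (add_isInverseSemigroup.eq_inv_of _ _ (by rw [← lam_add, ← lam_add, add_reg])
    (by rw [← lam_add, ← lam_add, neg_reg])).symm

theorem lam_neg (a b : S) : lam a (neg b) = add (neg (mul a b)) a := by
  rw [← neg_lam, lam, add_isInverseSemigroup.inv_mul, add_isInverseSemigroup.inv_inv]

theorem sq_add_self (a : S) : add (sq a) a = a := add_reg a

theorem sq_add_sq_self (a : S) : add (sq a) (sq a) = sq a :=
  add_isInverseSemigroup.mul_inv_idem a

theorem mul_self_of_add_self {e : S} (he : add e e = e) : mul e e = e := by
  have hne : neg e = e := add_isInverseSemigroup.inv_eq_self_of_idem he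
  have h := mul_reg e
  rwa [link, hne, he] at h

theorem add_self_of_mul_self {e : S} (he : mul e e = e) : add e e = e := by
  have hie : inv e = e := mul_isInverseSemigroup.inv_eq_self_of_idem he
  have hne : add (neg e) e = e := by rw [← link, hie, he]
  calc add e e = add e (add (neg e) e) := by rw [hne]
    _ = e := by rw [← add_assoc, add_reg]

theorem add_eq_of_add_sq_eq {e x : S} (he : add e (sq x) = sq x) : add e x = x := by
  conv_lhs => rw [← sq_add_self x, ← add_assoc, he]
  exact sq_add_self x

end WeakBrace

section DualWeakBrace

variable {S : Type*} [DualWeakBrace S]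

theorem neg_inv_add_inv (a : S) : add (neg (inv a)) (inv a) = add (neg a) a := by
  rw [← link (inv a), mul_isInverseSemigroup.inv_inv, ← DualWeakBrace.clifford, link]

theorem neg_add_self_add_sq_inv (a : S) :
    add (add (neg a) a) (sq (inv a)) = add (neg a) a := by
  have he := add_isInverseSemigroup.inv_mul_idem a
  have hne : neg (add (neg a) a) = add (neg a) a := add_isInverseSemigroup.inv_eq_self_of_idem he
  have hinv : mul (inv a) a = add (neg a) a := by rw [← DualWeakBrace.clifford, link]
  have hlam : lam (inv a) (add (neg a) a) = add (neg a) a := by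
    rw [lam, ← link a, ← mul_assoc, inv_reg, link, neg_inv_add_inv]
  have hsplit : lam (inv a) (add (neg a) a) =
      add (add (add (neg a) a) (sq (inv a))) (add (neg a) a) := by
    rw [lam_add, lam_neg, hinv, hne, lam, hinv]
    simp only [sq, add_assoc]
  exact add_isInverseSemigroup.mul_eq_of_mul_mul_eq he (add_isInverseSemigroup.mul_inv_idem _)
    (hsplit.symm.trans hlam)

theorem neg_add_self_add_sq (a : S) : add (add (neg a) a) (sq a) = add (neg a) a := by
  simpa only [mul_isInverseSemigroup.inv_inv, neg_inv_add_inv] using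
    neg_add_self_add_sq_inv (inv a)

theorem sq_eq_neg_add_self (a : S) : sq a = add (neg a) a := by
  have h := neg_add_self_add_sq (neg a)
  simp only [sq, add_isInverseSemigroup.inv_inv] at h
  calc sq a = add (sq a) (add (neg a) a) := h.symm
    _ = add (add (neg a) a) (sq a) :=
      add_isInverseSemigroup.idem_comm (add_isInverseSemigroup.mul_inv_idem a)
        (add_isInverseSemigroup.inv_mul_idem a)
    _ = add (neg a) a := neg_add_self_add_sq a

theorem add_sq_self (a : S) : add a (sq a) = a := by
  rw [sq_eq_neg_add_self, ← add_assoc, add_reg]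

theorem add_comm_of_add_self {e : S} (he : add e e = e) (x : S) : add e x = add x e :=
  add_isInverseSemigroup.idem_comm_of_clifford sq_eq_neg_add_self he x

theorem sq_add_comm (a x : S) : add (sq a) x = add x (sq a) :=
  add_comm_of_add_self (sq_add_sq_self a) x

theorem mul_comm_of_mul_self {e : S} (he : mul e e = e) (x : S) : mul e x = mul x e :=
  mul_isInverseSemigroup.idem_comm_of_clifford DualWeakBrace.clifford he x

theorem sq_eq_mul_inv (a : S) : sq a = mul a (inv a) := by
  rw [sq_eq_neg_add_self, link]

theorem sq_mul (a b : S) : sq (mul a b) = mul (sq a) (sq b) := by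
  simp only [sq_eq_mul_inv]
  rw [mul_isInverseSemigroup.inv_mul, mul_assoc a b, ← mul_assoc b,
    mul_comm_of_mul_self (mul_isInverseSemigroup.mul_inv_idem b), ← mul_assoc, mul_assoc a]

theorem add_mul_of_add_self {e f : S} (he : add e e = e) (hf : add f f = f) :
    add e (mul e f) = mul e f := by
  have hef : add (mul e f) (mul e f) = mul e f := add_self_of_mul_self
    (mul_isInverseSemigroup.mul_idem_of_idem (mul_self_of_add_self he) (mul_self_of_add_self hf))
  have hd := distrib e f f
  rw [hf, add_isInverseSemigroup.inv_eq_self_of_idem he] at hd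
  calc add e (mul e f) = add e (add (mul e f) (mul e f)) := by rw [hef]
    _ = add (add (mul e f) e) (mul e f) := by rw [← add_assoc, add_comm_of_add_self he]
    _ = mul e f := hd.symm

theorem sq_add_mul (a b : S) : add (sq a) (mul a b) = mul a b :=
  add_eq_of_add_sq_eq (by rw [sq_mul, add_mul_of_add_self (sq_add_sq_self a) (sq_add_sq_self b)])

theorem mul_add_sq (a b : S) : add (mul a b) (sq b) = mul a b := by
  rw [← sq_add_comm]
  refine add_eq_of_add_sq_eq ?_
  rw [sq_mul, mul_comm_of_mul_self (mul_self_of_add_self (sq_add_sq_self a)),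
    add_mul_of_add_self (sq_add_sq_self b) (sq_add_sq_self a)]

theorem add_cdot_add (a b : S) : add (add a (cdot a b)) b = mul a b := by
  rw [cdot, add_assoc, add_assoc, add_assoc, ← sq_eq_neg_add_self, mul_add_sq, ← add_assoc]
  exact sq_add_mul a b

theorem cdot_eq_sq_add_sq_iff (a b : S) : cdot a b = add (sq a) (sq b) ↔ mul a b = add a b := by
  constructor
  · intro h
    rw [← add_cdot_add, h, add_assoc, add_assoc (sq a), sq_add_self, ← add_assoc, add_sq_self]
  · intro h
    rw [cdot, h, ← add_assoc, add_assoc _ b, ← sq_eq_neg_add_self]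
    rfl

theorem add_add_brkt (a b : S) : add (add b a) (brkt a b) = add a b :=
  calc add (add b a) (brkt a b) = add b (add (sq a) (add (neg b) (add a b))) := by
        simp only [brkt, sq, add_assoc]
    _ = add (sq a) (add (sq b) (add a b)) := by
        rw [← add_assoc b (sq a), ← sq_add_comm, add_assoc, ← add_assoc b (neg b)]
        rfl
    _ = add a b := by
        rw [← add_assoc (sq b), sq_add_comm b a, add_assoc, sq_add_self, ← add_assoc, sq_add_self]

theorem brkt_eq_sq_add_sq_iff (a b : S) : brkt a b = add (sq a) (sq b) ↔ add a b = add b a := by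
  constructor
  · intro h
    rw [← add_add_brkt, h, add_assoc, ← add_assoc a, add_sq_self, ← sq_add_comm, ← add_assoc,
      add_sq_self]
  · intro h
    rw [brkt, add_assoc, add_assoc, h, ← add_assoc (neg b), ← sq_eq_neg_add_self, sq_add_comm,
      ← add_assoc, ← sq_eq_neg_add_self]

end DualWeakBrace

end WeakBrace

open WeakBrace
theorem stmt17 {S : Type*} [DualWeakBrace S] :
    Ann S = {a : S | ∀ b : S, cdot a b = add (sq a) (sq b) ∧
      cdot b a = add (sq a) (sq b) ∧ brkt a b = add (sq a) (sq b)} := by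
  ext a
  refine forall_congr' fun b => ?_
  rw [cdot_eq_sq_add_sq_iff, brkt_eq_sq_add_sq_iff, sq_add_comm a (sq b), cdot_eq_sq_add_sq_iff]
  constructor
  · rintro ⟨hcomm, hadd, hmul⟩
    exact ⟨hadd.symm, by rw [← hmul, ← hadd, hcomm], hcomm⟩
  · rintro ⟨hab, hba, hcomm⟩
    exact ⟨hcomm, hab.symm, by rw [hab, hba, hcomm]⟩
end

section
/- Let S be a dual weak brace such that the quotient S/Soc(S) is right nilpotent, i.e., (S/Soc(S))^(m) = E(S/Soc(S)) for some m ≥ 1, where the ideals S^(n) are defined by S^(1) = S and S^(n+1) = S^(n) · S (the additive inverse subsemigroup generated by elements x · s with x ∈ S^(n), s ∈ S). Then S itself is right nilpotent: S^(m+1) ⊆ E(S). -/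
/-!
Both `(S,+)` and `(S,∘)` are inverse semigroups, and the idempotents of `(S,∘)` are central
because it is Clifford. Distributivity then shows that the natural orders of `+` and `∘` agree
on `E(S)`, so `e ∘ f = e + f` for idempotents; from this `(S,+)` is Clifford as well, and
`e ∘ a = e + a` for every idempotent `e`.

If `a ∈ Soc(S)`, then `a + (-a) ∘ y = (a - a) ∘ y = a - a + y`, whence `(-a) ∘ y = -a + y`.
An element `x ∈ S^(m)` that is idempotent modulo `Soc(S)` has `-x = -(x + x) + x ∈ Soc(S)`,
so `x ∘ y = x + y` and `x · y = (-x + x) + (y - y)` is idempotent. Thus `S^(m+1)` is generated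
by idempotents and consists of idempotents.
-/

structure IsInverseSemigroup_s19 {M : Type*} (op : M → M → M) (inv : M → M) : Prop where
  assoc : ∀ a b c, op (op a b) c = op a (op b c)
  op_inv_op : ∀ a, op (op a (inv a)) a = a
  inv_op_inv : ∀ a, op (op (inv a) a) (inv a) = inv a
  eq_inv : ∀ a x, op (op a x) a = a → op (op x a) x = x → x = inv a

namespace IsInverseSemigroup_s19

variable {M : Type*} {op : M → M → M} {inv : M → M}

local infixl:70 " ⋆ " => op
local postfix:max "⁻" => inv

theorem inv_inv_s19 (H : IsInverseSemigroup_s19 op inv) (a : M) : a⁻⁻ = a :=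
  (H.eq_inv a⁻ a (H.inv_op_inv a) (H.op_inv_op a)).symm

theorem inv_eq_self (H : IsInverseSemigroup_s19 op inv) {e : M} (he : e ⋆ e = e) : e⁻ = e :=
  (H.eq_inv e e (by rw [he, he]) (by rw [he, he])).symm

theorem op_inv_idem (H : IsInverseSemigroup_s19 op inv) (a : M) : a ⋆ a⁻ ⋆ (a ⋆ a⁻) = a ⋆ a⁻ := by
  rw [← H.assoc, H.op_inv_op]

theorem inv_op_idem (H : IsInverseSemigroup_s19 op inv) (a : M) : a⁻ ⋆ a ⋆ (a⁻ ⋆ a) = a⁻ ⋆ a := by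
  rw [← H.assoc, H.inv_op_inv]

theorem op_op_of_idem (H : IsInverseSemigroup_s19 op inv) {e : M} (he : e ⋆ e = e) (a : M) :
    e ⋆ (e ⋆ a) = e ⋆ a := by
  rw [← H.assoc, he]

theorem op_idem (H : IsInverseSemigroup_s19 op inv) {e f : M} (he : e ⋆ e = e) (hf : f ⋆ f = f) :
    e ⋆ f ⋆ (e ⋆ f) = e ⋆ f := by
  set x := (e ⋆ f)⁻
  have h₁ := H.op_inv_op (e ⋆ f)
  have h₂ (c : M) := congrArg (· ⋆ c) (H.inv_op_inv (e ⋆ f))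
  simp only [H.assoc] at h₁ h₂
  -- `f ⋆ x ⋆ e` is an idempotent inverse of `e ⋆ f`
  have hx : f ⋆ x ⋆ e = x := by
    refine H.eq_inv _ _ ?_ ?_ <;> simp only [H.assoc, H.op_op_of_idem he, H.op_op_of_idem hf]
    · exact h₁
    · rw [h₂]
  have hxx : x ⋆ x = x := by
    rw [← hx]; simp only [H.assoc]; rw [h₂]
  rw [← H.inv_inv_s19 (e ⋆ f), H.inv_eq_self hxx, hxx]

theorem idem_comm_s19 (H : IsInverseSemigroup_s19 op inv) {e f : M} (he : e ⋆ e = e) (hf : f ⋆ f = f) :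
    e ⋆ f = f ⋆ e := by
  have hef := H.op_idem he hf
  have hfe := H.op_idem hf he
  have h := H.eq_inv (e ⋆ f) (f ⋆ e) ?_ ?_
  · rw [h, H.inv_eq_self hef]
  · simp only [H.assoc, H.op_op_of_idem he, H.op_op_of_idem hf] at hef ⊢; exact hef
  · simp only [H.assoc, H.op_op_of_idem he, H.op_op_of_idem hf] at hfe ⊢; exact hfe

theorem inv_op (H : IsInverseSemigroup_s19 op inv) (a b : M) : (a ⋆ b)⁻ = b⁻ ⋆ a⁻ := by
  refine (H.eq_inv _ _ ?_ ?_).symm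
  · calc a ⋆ b ⋆ (b⁻ ⋆ a⁻) ⋆ (a ⋆ b) = a ⋆ ((b ⋆ b⁻) ⋆ (a⁻ ⋆ a)) ⋆ b := by simp only [H.assoc]
      _ = a ⋆ a⁻ ⋆ a ⋆ (b ⋆ b⁻ ⋆ b) := by
        rw [H.idem_comm_s19 (H.op_inv_idem b) (H.inv_op_idem a)]; simp only [H.assoc]
      _ = a ⋆ b := by rw [H.op_inv_op, H.op_inv_op]
  · calc b⁻ ⋆ a⁻ ⋆ (a ⋆ b) ⋆ (b⁻ ⋆ a⁻) = b⁻ ⋆ ((a⁻ ⋆ a) ⋆ (b ⋆ b⁻)) ⋆ a⁻ := by simp only [H.assoc]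
      _ = b⁻ ⋆ b ⋆ b⁻ ⋆ (a⁻ ⋆ a ⋆ a⁻) := by
        rw [H.idem_comm_s19 (H.inv_op_idem a) (H.op_inv_idem b)]; simp only [H.assoc]
      _ = b⁻ ⋆ a⁻ := by rw [H.inv_op_inv, H.inv_op_inv]

theorem map_inv (H : IsInverseSemigroup_s19 op inv) {F : M → M} (hF : ∀ x y, F (x ⋆ y) = F x ⋆ F y)
    (x : M) : F x⁻ = (F x)⁻ :=
  H.eq_inv _ _ (by rw [← hF, ← hF, H.op_inv_op]) (by rw [← hF, ← hF, H.inv_op_inv])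

theorem idem_op_comm (H : IsInverseSemigroup_s19 op inv) (hC : ∀ a, a ⋆ a⁻ = a⁻ ⋆ a) {e : M}
    (he : e ⋆ e = e) (a : M) : e ⋆ a = a ⋆ e := by
  have hae : a ⋆ e ⋆ a⁻ = e ⋆ (a⁻ ⋆ a) :=
    calc a ⋆ e ⋆ a⁻ = a ⋆ e ⋆ (a ⋆ e)⁻ := by
          rw [H.inv_op, H.inv_eq_self he, ← H.assoc, H.assoc a e e, he]
      _ = (a ⋆ e)⁻ ⋆ (a ⋆ e) := hC _
      _ = e ⋆ (a⁻ ⋆ a) ⋆ e := by rw [H.inv_op, H.inv_eq_self he]; simp only [H.assoc]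
      _ = e ⋆ (a⁻ ⋆ a) := by rw [H.assoc, ← H.idem_comm_s19 he (H.inv_op_idem a), H.op_op_of_idem he]
  symm
  calc a ⋆ e = a ⋆ (a⁻ ⋆ a) ⋆ e := by rw [← H.assoc, H.op_inv_op]
    _ = a ⋆ e ⋆ a⁻ ⋆ a := by rw [H.assoc a, ← H.idem_comm_s19 he (H.inv_op_idem a)]; simp only [H.assoc]
    _ = e ⋆ a := by rw [hae, ← hC, H.assoc, H.op_inv_op]

end IsInverseSemigroup_s19

namespace WeakBrace

local infixl:65 " ⊹ " => WeakBrace.add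
local infixl:70 " ⊙ " => WeakBrace.mul
local prefix:max "−" => WeakBrace.neg
local postfix:max "⁻" => WeakBrace.inv

section

variable {S : Type*} [WeakBrace S]

theorem isInverseSemigroup_add : IsInverseSemigroup_s19 (add : S → S → S) neg :=
  ⟨add_assoc, add_reg, neg_reg, neg_unique⟩

theorem isInverseSemigroup_mul : IsInverseSemigroup_s19 (mul : S → S → S) inv :=
  ⟨mul_assoc, mul_reg, inv_reg, inv_unique⟩

theorem neg_neg (a : S) : −−a = a := isInverseSemigroup_add.inv_inv_s19 a

theorem neg_add_rev (a b : S) : −(a ⊹ b) = −b ⊹ −a := isInverseSemigroup_add.inv_op a b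

theorem neg_of_isIdem {e : S} (he : IsIdem e) : −e = e := isInverseSemigroup_add.inv_eq_self he

theorem isIdem_add {e f : S} (he : IsIdem e) (hf : IsIdem f) : IsIdem (e ⊹ f) :=
  isInverseSemigroup_add.op_idem he hf

theorem isIdem_add_neg_self (a : S) : IsIdem (a ⊹ −a) := isInverseSemigroup_add.op_inv_idem a

theorem isIdem_neg_add_self (a : S) : IsIdem (−a ⊹ a) := isInverseSemigroup_add.inv_op_idem a

theorem add_neg_add_self (a : S) : a ⊹ (−a ⊹ a) = a := by rw [← add_assoc, add_reg]

theorem add_comm_of_isIdem_of_isIdem {e f : S} (he : IsIdem e) (hf : IsIdem f) : e ⊹ f = f ⊹ e :=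
  isInverseSemigroup_add.idem_comm_s19 he hf

theorem add_add_self_of_isIdem {e f : S} (he : IsIdem e) (hf : IsIdem f) : e ⊹ f ⊹ e = e ⊹ f := by
  rw [add_assoc, add_comm_of_isIdem_of_isIdem hf he, ← add_assoc, he]

theorem isIdem_of_genAdd {X : Set S} (hX : ∀ x ∈ X, IsIdem x) {s : S} (hs : genAdd X s) :
    IsIdem s := by
  induction hs with
  | base x hx => exact hX x hx
  | add a b _ _ ha hb => exact isIdem_add ha hb
  | neg a _ ha => rwa [neg_of_isIdem ha]

theorem isIdem_iff_mul_self {e : S} : IsIdem e ↔ e ⊙ e = e := by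
  constructor
  · intro he
    have h : e ⊙ e⁻ = e := by rw [link, neg_of_isIdem he]; exact he
    calc e ⊙ e = e ⊙ e⁻ ⊙ (e ⊙ e⁻) := by rw [h]
      _ = e := by rw [isInverseSemigroup_mul.op_inv_idem, h]
  · intro he
    have h := link e
    rw [isInverseSemigroup_mul.inv_eq_self he, he] at h
    have := isIdem_neg_add_self e
    rwa [← h] at this

theorem isIdem_mul {e f : S} (he : IsIdem e) (hf : IsIdem f) : IsIdem (e ⊙ f) :=
  isIdem_iff_mul_self.2
    (isInverseSemigroup_mul.op_idem (isIdem_iff_mul_self.1 he) (isIdem_iff_mul_self.1 hf))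

end

section

variable {S : Type*} [DualWeakBrace S]

theorem mul_comm_of_isIdem {e : S} (he : IsIdem e) (a : S) : e ⊙ a = a ⊙ e :=
  isInverseSemigroup_mul.idem_op_comm DualWeakBrace.clifford (isIdem_iff_mul_self.1 he) a

theorem add_eq_left_of_mul_eq_left {e f : S} (he : IsIdem e) (hf : IsIdem f) (h : e ⊙ f = e) :
    e ⊹ f = e := by
  have key := distrib f e e
  rw [he, mul_comm_of_isIdem hf, h, neg_of_isIdem hf] at key
  exact (add_add_self_of_isIdem he hf).symm.trans key.symm

theorem mul_eq_left_of_add_eq_left {e f : S} (he : IsIdem e) (hf : IsIdem f) (h : e ⊹ f = e) :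
    e ⊙ f = e := by
  have hee := isIdem_iff_mul_self.1 he
  have hg := isIdem_mul he hf
  have hge : e ⊙ f ⊙ e = e ⊙ f := by
    rw [mul_assoc, ← mul_comm_of_isIdem he, ← mul_assoc, hee]
  have key := distrib e e f
  rw [h, hee, neg_of_isIdem he, he] at key
  calc e ⊙ f = e ⊙ f ⊹ e := (add_eq_left_of_mul_eq_left hg he hge).symm
    _ = e := by rw [← add_comm_of_isIdem_of_isIdem he hg, ← key]

theorem mul_eq_add_of_isIdem_of_isIdem {e f : S} (he : IsIdem e) (hf : IsIdem f) :
    e ⊙ f = e ⊹ f := by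
  have hg := isIdem_mul he hf
  have hz : IsIdem (e ⊹ f) := isIdem_add he hf
  have hge : e ⊙ f ⊹ e = e ⊙ f := add_eq_left_of_mul_eq_left hg he <| by
    rw [mul_assoc, ← mul_comm_of_isIdem he, ← mul_assoc, isIdem_iff_mul_self.1 he]
  have hgf : e ⊙ f ⊹ f = e ⊙ f := add_eq_left_of_mul_eq_left hg hf <| by
    rw [mul_assoc, isIdem_iff_mul_self.1 hf]
  have hze : (e ⊹ f) ⊙ e = e ⊹ f :=
    mul_eq_left_of_add_eq_left hz he (add_add_self_of_isIdem he hf)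
  have hzf : (e ⊹ f) ⊙ f = e ⊹ f := mul_eq_left_of_add_eq_left hz hf <| by
    rw [add_assoc, hf]
  have hzg : e ⊹ f ⊹ e ⊙ f = e ⊹ f := add_eq_left_of_mul_eq_left hz hg <| by
    rw [← mul_assoc, hze, hzf]
  calc e ⊙ f = e ⊙ f ⊹ (e ⊹ f) := by rw [← add_assoc, hge, hgf]
    _ = e ⊹ f := by rw [add_comm_of_isIdem_of_isIdem hg hz, hzg]

theorem neg_add_self_mul (a b : S) : −(a ⊙ b) ⊹ a ⊙ b = −b ⊹ b ⊹ (−a ⊹ a) :=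
  calc −(a ⊙ b) ⊹ a ⊙ b = a ⊙ (b ⊙ b⁻) ⊙ a⁻ := by
        rw [← link, isInverseSemigroup_mul.inv_op]; simp only [mul_assoc]
    _ = (−b ⊹ b) ⊙ (−a ⊹ a) := by
        rw [link b, ← mul_comm_of_isIdem (isIdem_neg_add_self b), mul_assoc, link]
    _ = −b ⊹ b ⊹ (−a ⊹ a) :=
        mul_eq_add_of_isIdem_of_isIdem (isIdem_neg_add_self b) (isIdem_neg_add_self a)

theorem mul_add_neg_add_self (a x : S) : a ⊙ x ⊹ (−a ⊹ a) = a ⊙ x :=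
  calc a ⊙ x ⊹ (−a ⊹ a) = a ⊙ x ⊹ (−(a ⊙ x) ⊹ a ⊙ x ⊹ (−a ⊹ a)) := by
        rw [← add_assoc (a ⊙ x) (−(a ⊙ x) ⊹ a ⊙ x), add_neg_add_self]
    _ = a ⊙ x := by
        rw [neg_add_self_mul, add_assoc (−x ⊹ x), isIdem_neg_add_self, ← neg_add_self_mul,
          add_neg_add_self]

theorem mul_neg_inv (a : S) : a ⊙ −a⁻ = a ⊹ a := by
  -- `x ↦ a ∘ x - a` is an endomorphism of `(S,+)`, so it commutes with `-`
  have hν : ∀ x y, a ⊙ (x ⊹ y) ⊹ −a = a ⊙ x ⊹ −a ⊹ (a ⊙ y ⊹ −a) := fun x y => by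
    rw [distrib]; simp only [add_assoc]
  have h := isInverseSemigroup_add.map_inv (F := fun t => a ⊙ t ⊹ −a) hν a⁻
  rw [link, neg_reg, neg_neg] at h
  rw [← mul_add_neg_add_self, ← add_assoc, h]

theorem neg_add_self_add_add_neg_self (a : S) : −a ⊹ a ⊹ (a ⊹ −a) = −a ⊹ a := by
  have h : a ⊙ (a⁻ ⊙ a) = a := by rw [← mul_assoc, mul_reg]
  have hinv : a⁻ ⊙ a = −a⁻ ⊹ a⁻ := by
    rw [← link, isInverseSemigroup_mul.inv_inv_s19]
  -- `a = a ∘ (a⁻ ∘ a)` expands to `a = a + a - a + (-a + a)`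
  rw [hinv, distrib, mul_neg_inv, link] at h
  calc −a ⊹ a ⊹ (a ⊹ −a) = −a ⊹ a ⊹ (a ⊹ −a) ⊹ (−a ⊹ a) :=
        (add_add_self_of_isIdem (isIdem_neg_add_self a) (isIdem_add_neg_self a)).symm
    _ = −a ⊹ a := by
        have h' := congrArg (−a ⊹ ·) h
        simp only [add_assoc] at h' ⊢
        exact h'

theorem add_neg_self_eq_neg_add_self (a : S) : a ⊹ −a = −a ⊹ a := by
  have h := neg_add_self_add_add_neg_self (−a)
  rw [neg_neg] at h
  rw [← h, add_comm_of_isIdem_of_isIdem (isIdem_add_neg_self a) (isIdem_neg_add_self a),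
    neg_add_self_add_add_neg_self]

theorem add_comm_of_isIdem {e : S} (he : IsIdem e) (a : S) : e ⊹ a = a ⊹ e :=
  isInverseSemigroup_add.idem_op_comm add_neg_self_eq_neg_add_self he a

theorem add_neg_self_add_mul (a b : S) : a ⊹ −a ⊹ a ⊙ b = a ⊙ b := by
  rw [add_comm_of_isIdem (isIdem_add_neg_self a), add_neg_self_eq_neg_add_self,
    mul_add_neg_add_self]

theorem mul_eq_add_of_isIdem {e : S} (he : IsIdem e) (y : S) : e ⊙ y = e ⊹ y := by
  -- `e ∘ y = y + q` with `q = -y + e ∘ y` idempotent; compute `-(e ∘ y) + e ∘ y` in two ways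
  have hcomm : y ⊙ e = e ⊙ y := (mul_comm_of_isIdem he y).symm
  have hdist : e ⊙ y = e ⊙ y ⊹ −y ⊹ e ⊙ y := by
    have := distrib y e e
    rwa [he, hcomm] at this
  have hq : IsIdem (−y ⊹ e ⊙ y) := by
    show −y ⊹ e ⊙ y ⊹ (−y ⊹ e ⊙ y) = −y ⊹ e ⊙ y
    rw [add_assoc, ← add_assoc (e ⊙ y), ← hdist]
  have hyq : y ⊹ (−y ⊹ e ⊙ y) = e ⊙ y := by rw [← add_assoc, ← hcomm, add_neg_self_add_mul]
  have hneg : −(e ⊙ y) ⊹ e ⊙ y = −y ⊹ y ⊹ e := by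
    rw [neg_add_self_mul, neg_of_isIdem he, he]
  generalize −y ⊹ e ⊙ y = q at hq hyq
  rw [← hyq] at hneg ⊢
  rw [neg_add_rev, neg_of_isIdem hq] at hneg
  have hqy : q ⊹ (−y ⊹ y) = −y ⊹ y ⊹ e := by
    rw [← hneg, ← add_add_self_of_isIdem hq (isIdem_neg_add_self y)]
    simp only [add_assoc]
  calc y ⊹ q = y ⊹ (−y ⊹ y) ⊹ q := by rw [add_neg_add_self]
    _ = y ⊹ (q ⊹ (−y ⊹ y)) := by rw [add_assoc, add_comm_of_isIdem (isIdem_neg_add_self y)]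
    _ = y ⊹ (−y ⊹ y) ⊹ e := by rw [hqy, ← add_assoc]
    _ = e ⊹ y := by rw [add_neg_add_self, add_comm_of_isIdem he]

theorem neg_mul_of_mem_soc {a : S} (ha : a ∈ Soc S) (y : S) : −a ⊙ y = −a ⊹ y := by
  have h : a ⊹ −a ⊙ y = a ⊹ −a ⊹ y :=
    calc a ⊹ −a ⊙ y = a ⊙ −a ⊙ y := by rw [(ha _).1, mul_assoc]
      _ = a ⊹ −a ⊹ y := by rw [← (ha _).1, mul_eq_add_of_isIdem (isIdem_add_neg_self a)]
  calc −a ⊙ y = −a ⊹ −−a ⊹ −a ⊙ y := (add_neg_self_add_mul (−a) y).symm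
    _ = −a ⊹ (a ⊹ −a ⊙ y) := by rw [neg_neg, add_assoc]
    _ = −a ⊹ y := by rw [h, ← add_assoc, ← add_assoc, neg_reg]

theorem isIdem_cdot_of_neg_mem_soc {x : S} (hx : −x ∈ Soc S) (y : S) : IsIdem (cdot x y) := by
  have hxy : x ⊙ y = x ⊹ y := by simpa only [neg_neg] using neg_mul_of_mem_soc hx y
  have hc : cdot x y = −x ⊹ x ⊹ (y ⊹ −y) := by
    simp only [cdot, hxy, add_assoc]
  rw [hc]
  exact isIdem_add (isIdem_neg_add_self x) (isIdem_add_neg_self y)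

theorem neg_add_add_self (a : S) : −(a ⊹ a) ⊹ a = −a := by
  rw [neg_add_rev, add_assoc, ← add_neg_self_eq_neg_add_self, ← add_assoc, neg_reg]

end

end WeakBrace

open WeakBrace
theorem stmt19 {S : Type*} [DualWeakBrace S] (m : ℕ) (hm : 1 ≤ m)
    (h : ∀ x ∈ Spow S m, simI (Soc S) (add x x) x) :
    ∀ x ∈ Spow S (m + 1), IsIdem x := by
  obtain ⟨k, rfl⟩ : ∃ k, m = k + 1 := ⟨m - 1, by omega⟩
  intro x hx
  refine isIdem_of_genAdd ?_ hx
  rintro _ ⟨a, ha, y, -, rfl⟩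
  apply isIdem_cdot_of_neg_mem_soc
  simpa only [neg_add_add_self] using (h a ha).2
end
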